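/- arXiv:0806.1210 — 2 statements merged into one kernel-verified Lean document; each statement's English description precedes it below -/
import Mathlib

section
/- For every n-folding sequence (a_1, ..., a_{2^n - 1}) with n ≥ 2, for all 0 ≤ r ≤ n-2 and 0 ≤ k ≤ 2^{n-r-1} - 1, we have a_{2^r(1+2k)} = (-1)^k a_{2^r}. -/
/-- Reversal-with-negation of a finite ±1 word. -/
def negRev (S : List ℤ) : List ℤ := (S.map (fun x => -x)).reverse

/-- `IsFold n S` : `S` is an `n`-folding sequence. -/
inductive IsFold : ℕ → List ℤ → Prop
  | zero : IsFold 0 []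
  | succ (n : ℕ) (S : List ℤ) (ε : ℤ) : IsFold n S → (ε = 1 ∨ ε = -1) →
      IsFold (n + 1) (negRev S ++ ε :: S)

/-- The subword `(a (h+1), …, a (h+t))` of a bi-infinite sequence. -/
def subwordAt (a : ℤ → ℤ) (h : ℤ) (t : ℕ) : List ℤ :=
  (List.range t).map fun i => a (h + 1 + (i : ℤ))

/-- `T` is a finite subword of the bi-infinite sequence `a`. -/
def IsSubword (a : ℤ → ℤ) (T : List ℤ) : Prop := ∃ h : ℤ, T = subwordAt a h T.length

/-- A finite folding sequence: a subword of some `n`-folding sequence. -/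
def IsFiniteFold (T : List ℤ) : Prop := ∃ n S, IsFold n S ∧ T <:+: S

/-- The sequence takes values in `{+1, -1}`. -/
def PM (a : ℤ → ℤ) : Prop := ∀ h : ℤ, a h = 1 ∨ a h = -1

/-- `a (hn + k·2^(n+1)) = (-1)^k · a hn` for all `k`. -/
def AltProp (a : ℤ → ℤ) (n : ℕ) (hn : ℤ) : Prop :=
  ∀ k : ℤ, a (hn + k * 2 ^ (n + 1)) = if Even k then a hn else -a hn

/-- A complete folding sequence (alternation characterization). -/
def CompleteFold (a : ℤ → ℤ) : Prop := PM a ∧ ∀ n : ℕ, ∃ hn : ℤ, AltProp a n hn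

/-- Rotate a direction left (`η = 1`) or right (otherwise). -/
def rot (d : ℤ × ℤ) (η : ℤ) : ℤ × ℤ := if η = 1 then (-d.2, d.1) else (d.2, -d.1)

/-- Unit lattice direction. -/
def IsUnitVec (d : ℤ × ℤ) : Prop := d = (1, 0) ∨ d = (0, 1) ∨ d = (-1, 0) ∨ d = (0, -1)

/-- Direction of the `i`-th step of the curve with turn word `η`. -/
def dirAt (d0 : ℤ × ℤ) (η : List ℤ) (i : ℕ) : ℤ × ℤ := (η.take i).foldl rot d0

/-- `i`-th vertex of the curve started at `X0` with initial direction `d0`. -/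
def vertexAt (X0 d0 : ℤ × ℤ) (η : List ℤ) (i : ℕ) : ℤ × ℤ :=
  X0 + ∑ j ∈ Finset.range i, dirAt d0 η j

/-- `i`-th (unordered) unit edge of the curve. -/
def edgeAt (X0 d0 : ℤ × ℤ) (η : List ℤ) (i : ℕ) : Sym2 (ℤ × ℤ) :=
  s(vertexAt X0 d0 η i, vertexAt X0 d0 η (i + 1))

/-- A complete folding curve, given by its vertex function. -/
def IsCFCurve (V : ℤ → ℤ × ℤ) : Prop :=
  (∀ i : ℤ, IsUnitVec (V (i + 1) - V i)) ∧
  ∃ η : ℤ → ℤ, CompleteFold η ∧ ∀ i : ℤ, V (i + 2) - V (i + 1) = rot (V (i + 1) - V i) (η i)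

/-- Two bi-infinite curves are disjoint: no common unit edge, and at every common
lattice point the four incident traversed edges point in four distinct directions
(the curves do not cross). -/
def CurvesDisjoint (V W : ℤ → ℤ × ℤ) : Prop :=
  (∀ i j : ℤ, s(V i, V (i + 1)) ≠ s(W j, W (j + 1))) ∧
  ∀ i j : ℤ, V i = W j →
    List.Pairwise (· ≠ ·) [V (i - 1) - V i, V (i + 1) - V i, W (j - 1) - W j, W (j + 1) - W j]

lemma negRev_length (T : List ℤ) : (negRev T).length = T.length := by simp [negRev]

lemma negRev_getD (T : List ℤ) (i : ℕ) (hi : i < T.length) :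
    (negRev T).getD i 0 = -(T.getD (T.length - 1 - i) 0) := by
  unfold negRev
  rw [List.getD_eq_getElem _ _ (by simpa using hi), List.getD_eq_getElem _ _ (by omega)]
  simp [List.getElem_reverse]

lemma fold_length {n : ℕ} {S : List ℤ} (h : IsFold n S) : S.length = 2 ^ n - 1 := by
  induction h with
  | zero => simp
  | succ n S ε h hε ih =>
      have h1 : 1 ≤ 2 ^ n := Nat.one_le_two_pow
      simp only [List.length_append, List.length_cons, negRev_length, ih, pow_succ]
      omega

lemma key : ∀ (n : ℕ) (S : List ℤ), IsFold n S → ∀ r k : ℕ, 2 ≤ n → r ≤ n - 2 →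
    k ≤ 2 ^ (n - r - 1) - 1 →
    S.getD (2 ^ r * (1 + 2 * k) - 1) 0 =
      if Even k then S.getD (2 ^ r - 1) 0 else -(S.getD (2 ^ r - 1) 0) := by
  intro n S h
  induction h with
  | zero => intro r k hn hr hk; omega
  | succ n T ε hT hε IH =>
    intro r k hn hr hk
    have hL : T.length = 2 ^ n - 1 := fold_length hT
    have hn1 : 1 ≤ n := by omega
    have hr1 : r ≤ n - 1 := by omega
    have hke : n + 1 - r - 1 = n - r := by omega
    rw [hke] at hk
    have hP1 : 1 ≤ 2 ^ r := Nat.one_le_two_pow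
    have hm1 : 1 ≤ 2 ^ (n - r - 1) := Nat.one_le_two_pow
    obtain ⟨m, hm⟩ : ∃ m, 2 ^ (n - r - 1) = m := ⟨_, rfl⟩
    rw [hm] at hm1
    have h2nr : 2 ^ (n - r) = 2 * m := by
      rw [show n - r = (n - r - 1) + 1 by omega, pow_succ, hm]; ring
    have h2n : 2 ^ n = 2 ^ r * (2 * m) := by
      rw [show n = r + (n - r) by omega, pow_add, h2nr]
    rw [h2nr] at hk
    -- basic index computation lemmas
    have left : ∀ i, i < 2 ^ n - 1 →
        (negRev T ++ ε :: T).getD i 0 = -(T.getD (2 ^ n - 2 - i) 0) := by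
      intro i hi
      rw [List.getD_append _ _ _ _ (by rw [negRev_length, hL]; exact hi),
        negRev_getD T i (by omega)]
      congr 2
      omega
    have right : ∀ i, (negRev T ++ ε :: T).getD (2 ^ n + i) 0 = T.getD i 0 := by
      intro i
      have hN1 : 1 ≤ 2 ^ n := Nat.one_le_two_pow
      rw [List.getD_append_right _ _ _ _ (by rw [negRev_length, hL]; omega)]
      rw [negRev_length, hL, show 2 ^ n + i - (2 ^ n - 1) = i + 1 by omega]
      simp
    rcases Nat.eq_zero_or_pos k with rfl | hk1
    · simp
    rcases eq_or_lt_of_le hr1 with hrn | hrn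
    · -- r = n - 1, so m = 1 and k = 1
      have hmm : m = 1 := by rw [← hm, show n - r - 1 = 0 by omega, pow_zero]
      have hk2 : k = 1 := by omega
      subst hk2
      have hQ2 : 2 ^ n = 2 ^ r * 2 := by rw [h2n, hmm]
      have hi1 : 2 ^ r * (1 + 2 * 1) - 1 = 2 ^ n + (2 ^ r - 1) := by
        have : 2 ^ r * (1 + 2 * 1) = 2 ^ r * 2 + 2 ^ r := by ring
        omega
      have hi2 : 2 ^ r - 1 < 2 ^ n - 1 := by omega
      rw [hi1, right, left _ hi2, show 2 ^ n - 2 - (2 ^ r - 1) = 2 ^ r - 1 by omega]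
      simp
    · -- r ≤ n - 2
      have hrn2 : r ≤ n - 2 := by omega
      have hn2 : 2 ≤ n := by omega
      have hmdvd : 2 ∣ m := by rw [← hm]; exact dvd_pow_self 2 (by omega)
      obtain ⟨j, hj⟩ : ∃ j, m = 1 + j := ⟨m - 1, by omega⟩
      -- the middle value: S'.getD (2^r - 1) = T.getD (2^r - 1)
      have hz : 2 ^ r * (1 + 2 * j) + 2 ^ r = 2 ^ n := by rw [h2n, hj]; ring
      have hz1 : 0 < 2 ^ r * (1 + 2 * j) := by positivity
      have hmid : (negRev T ++ ε :: T).getD (2 ^ r - 1) 0 = T.getD (2 ^ r - 1) 0 := by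
        rw [left _ (by omega), show 2 ^ n - 2 - (2 ^ r - 1) = 2 ^ r * (1 + 2 * j) - 1 by omega]
        rw [IH r j hn2 hrn2 (by rw [hm]; omega)]
        have hje : ¬ Even j := by
          rw [Nat.even_iff]; omega
        simp [hje]
      rw [hmid]
      rcases lt_or_ge k m with hkm | hkm
      · -- left half: k < m
        obtain ⟨j', hj'⟩ : ∃ j', k + j' + 1 = m := ⟨m - 1 - k, by omega⟩
        have hxy : 2 ^ r * (1 + 2 * k) + 2 ^ r * (1 + 2 * j') = 2 ^ n := by
          rw [h2n, ← hj']; ring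
        have hx1 : 0 < 2 ^ r * (1 + 2 * k) := by positivity
        have hy1 : 0 < 2 ^ r * (1 + 2 * j') := by positivity
        rw [left _ (by omega),
          show 2 ^ n - 2 - (2 ^ r * (1 + 2 * k) - 1) = 2 ^ r * (1 + 2 * j') - 1 by omega]
        rw [IH r j' hn2 hrn2 (by rw [hm]; omega)]
        rcases Nat.even_or_odd k with hke2 | hke2
        · have : ¬ Even j' := by
            rw [Nat.even_iff] at *; omega
          simp [this, hke2]
        · have : Even j' := by
            rw [Nat.odd_iff] at hke2; rw [Nat.even_iff]; omega
          simp [this, Nat.not_even_iff_odd.2 hke2]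
      · -- right half: k ≥ m
        obtain ⟨t, ht⟩ : ∃ t, k = m + t := ⟨k - m, by omega⟩
        have hx : 2 ^ r * (1 + 2 * k) = 2 ^ n + 2 ^ r * (1 + 2 * t) := by
          rw [h2n, ht]; ring
        have hy1 : 0 < 2 ^ r * (1 + 2 * t) := by positivity
        rw [show 2 ^ r * (1 + 2 * k) - 1 = 2 ^ n + (2 ^ r * (1 + 2 * t) - 1) by omega, right]
        rw [IH r t hn2 hrn2 (by rw [hm]; omega)]
        rcases Nat.even_or_odd k with hke2 | hke2
        · have : Even t := by
            rw [Nat.even_iff] at *; omega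
          simp [this, hke2]
        · have : ¬ Even t := by
            rw [Nat.odd_iff] at hke2; rw [Nat.even_iff]; omega
          simp [this, Nat.not_even_iff_odd.2 hke2]

theorem statement3 (n : ℕ) (hn : 2 ≤ n) (S : List ℤ) (h : IsFold n S) (r k : ℕ)
    (hr : r ≤ n - 2) (hk : k ≤ 2 ^ (n - r - 1) - 1) :
    S.getD (2 ^ r * (1 + 2 * k) - 1) 0 =
      if Even k then S.getD (2 ^ r - 1) 0 else -(S.getD (2 ^ r - 1) 0) := by
  exact key n S h r k hn hr hk
end

section
/- Let (a_h)_{h∈ℤ} be a bi-infinite {+1,-1}-sequence such that for each n ∈ ℕ there exists h_n ∈ ℤ with a_{h_n + k·2^{n+1}} = (-1)^k a_{h_n} for all k ∈ ℤ, and let E_n = h_n + 2^n ℤ. Then for every n ∈ ℕ and every h ∈ E_n, the word (a_{h-2^n+1}, ..., a_{h+2^n-1}) is an (n+1)-folding sequence. -/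
lemma subwordAt_eq (a : ℤ → ℤ) (c : ℤ) (t : ℕ) :
    subwordAt a c t = (List.range t).map (fun i : ℕ => a (c + 1 + (i : ℤ))) := by
  unfold subwordAt
  rw [show ((do let a ← List.range t; pure (↑a : ℤ)) : List ℤ) = (List.range t).map Nat.cast from ?_ , List.map_map]
  · rfl
  · induction (List.range t) with
    | nil => rfl
    | cons x xs ih => simp_all [List.flatMap_cons]

lemma alt_neg {a : ℤ → ℤ} {m : ℕ} {c : ℤ} (H : AltProp a m c)
    {p q : ℤ} (hpq : ¬ Even (q - p)) :
    a (c + q * 2 ^ (m + 1)) = - a (c + p * 2 ^ (m + 1)) := by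
  rw [Int.even_sub] at hpq
  rw [H p, H q]
  by_cases hp : Even p
  · rw [if_pos hp, if_neg (fun hq => hpq (iff_of_true hq hp))]
  · rw [if_neg hp, if_pos (by by_contra hq; exact hpq (iff_of_false hq hp)), neg_neg]

lemma subwordAt_length (a : ℤ → ℤ) (c : ℤ) (t : ℕ) : (subwordAt a c t).length = t := by
  simp [subwordAt_eq]

lemma subwordAt_append (a : ℤ → ℤ) (c : ℤ) (s t : ℕ) :
    subwordAt a c (s + t) = subwordAt a c s ++ subwordAt a (c + s) t := by
  simp only [subwordAt_eq]
  rw [List.range_add, List.map_append, List.map_map]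
  congr 1
  apply List.map_congr_left
  intro i _
  simp only [Function.comp_apply]
  congr 1
  push_cast
  ring

lemma subwordAt_one (a : ℤ → ℤ) (c : ℤ) : subwordAt a c 1 = [a (c + 1)] := by
  rw [subwordAt_eq, show List.range 1 = [0] from rfl]
  simp

lemma negRev_subwordAt (a : ℤ → ℤ) (x : ℤ) (L : ℕ)
    (hanti : ∀ t : ℕ, 0 < t → t ≤ L → a (x - t) = - a (x + t)) :
    negRev (subwordAt a x L) = subwordAt a (x - L - 1) L := by
  apply List.ext_getElem
  · simp [negRev, subwordAt_length]
  intro i h1 h2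
  have hiL : i < L := by simpa [negRev, subwordAt_length] using h1
  simp only [negRev, subwordAt_eq, List.getElem_reverse, List.getElem_map, List.getElem_range,
    List.length_map, List.length_reverse, List.length_range]
  have ht := hanti (L - i) (by omega) (by omega)
  have c1 : ((L - 1 - i : ℕ) : ℤ) = (L : ℤ) - 1 - i := by omega
  have c2 : ((L - i : ℕ) : ℤ) = (L : ℤ) - i := by omega
  rw [c1, show x + 1 + ((L : ℤ) - 1 - i) = x + ((L - i : ℕ) : ℤ) from by rw [c2]; ring,
    show x - (L : ℤ) - 1 + 1 + (i : ℤ) = x - ((L - i : ℕ) : ℤ) from by rw [c2]; ring, ht]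


lemma h_not_dvd {a : ℤ → ℤ} {h : ℕ → ℤ} (hpm : PM a) (halt : ∀ n : ℕ, AltProp a n (h n))
    {m N : ℕ} (hmN : m < N) : ¬ (2 ^ (m + 1) : ℤ) ∣ (h N - h m) := by
  rintro ⟨r, hr⟩
  have e1 : a (h N + 1 * 2 ^ (N + 1)) = - a (h N) := by
    rw [halt N 1, if_neg (by decide)]
  have hNm : h N = h m + r * 2 ^ (m + 1) := by linarith
  have hpow : (2 : ℤ) ^ (N + 1) = 2 ^ (N - m) * 2 ^ (m + 1) := by
    rw [← pow_add]; congr 1; omega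
  have e2 : h N + 1 * 2 ^ (N + 1) = h m + (r + 2 ^ (N - m)) * 2 ^ (m + 1) := by
    rw [hNm, hpow]; ring
  have hev : Even ((r + 2 ^ (N - m)) - r) := by
    have h2 : (2 : ℤ) ^ (N - m) = 2 * 2 ^ (N - m - 1) := by
      rw [← pow_succ']; congr 1; omega
    exact ⟨2 ^ (N - m - 1), by linarith⟩
  have hiff : Even (r + 2 ^ (N - m)) ↔ Even r := Int.even_sub.mp hev
  have e3 : a (h m + (r + 2 ^ (N - m)) * 2 ^ (m + 1)) = a (h m + r * 2 ^ (m + 1)) := by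
    rw [halt m r, halt m (r + 2 ^ (N - m))]
    by_cases hrE : Even r
    · rw [if_pos hrE, if_pos (hiff.mpr hrE)]
    · rw [if_neg hrE, if_neg (fun hE => hrE (hiff.mp hE))]
  rw [e2, e3, ← hNm] at e1
  rcases hpm (h N) with h1 | h1 <;> omega

lemma h_dvd {a : ℤ → ℤ} {h : ℕ → ℤ} (hpm : PM a) (halt : ∀ n : ℕ, AltProp a n (h n)) :
    ∀ {m N : ℕ}, m ≤ N → (2 ^ m : ℤ) ∣ (h N - h m) := by
  intro m
  induction m with
  | zero => intro N _; simp
  | succ m ih =>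
    intro N hN
    obtain ⟨u, hu⟩ := ih (show m ≤ N by omega)
    obtain ⟨v, hv⟩ := ih (Nat.le_succ m)
    have hu2 : ¬ Even u := by
      rintro ⟨u', rfl⟩
      exact h_not_dvd hpm halt (show m < N by omega) ⟨u', by rw [hu]; ring⟩
    have hv2 : ¬ Even v := by
      rintro ⟨v', rfl⟩
      exact h_not_dvd hpm halt (Nat.lt_succ_self m) ⟨v', by rw [hv]; ring⟩
    rw [Int.not_even_iff_odd] at hu2 hv2
    obtain ⟨w, hw⟩ : Even (u - v) := by
      rcases hu2 with ⟨u', rfl⟩; rcases hv2 with ⟨v', rfl⟩; exact ⟨u' - v', by ring⟩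
    refine ⟨w, ?_⟩
    have e : h N - h (m + 1) = 2 ^ m * (u - v) := by linear_combination hu - hv
    rw [e, hw]; ring

/-- key antisymmetry around a center of level n+1 -/
lemma antisym {a : ℤ → ℤ} {h : ℕ → ℤ} (hpm : PM a) (halt : ∀ n : ℕ, AltProp a n (h n))
    {n : ℕ} {x : ℤ} (hx : (2 ^ (n + 1) : ℤ) ∣ (x - h (n + 1)))
    {t : ℕ} (ht0 : 0 < t) (ht : t < 2 ^ (n + 1)) :
    a (x - t) = - a (x + t) := by
  obtain ⟨k, u, hu2, htu⟩ := Nat.exists_eq_pow_mul_and_not_dvd ht0.ne' 2 (by norm_num)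
  have hu0 : 0 < u := by
    rcases Nat.eq_zero_or_pos u with h0 | h0
    · exfalso; exact hu2 (h0 ▸ dvd_zero 2)
    · exact h0
  have hkn : k ≤ n := by
    by_contra hk
    have h1 : 2 ^ (n + 1) ≤ 2 ^ k := Nat.pow_le_pow_right (by norm_num) (by omega)
    have h2 : 2 ^ k ≤ 2 ^ k * u := Nat.le_mul_of_pos_right _ hu0
    omega
  -- h (n+1) - h k = 2^k * w  with w odd
  obtain ⟨w, hw⟩ : (2 ^ k : ℤ) ∣ (h (n + 1) - h k) := h_dvd hpm halt (by omega)
  have hwodd : ¬ Even w := by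
    rintro ⟨w', rfl⟩
    exact h_not_dvd hpm halt (show k < n + 1 by omega) ⟨w', by rw [hw]; ring⟩
  obtain ⟨s, hs⟩ := hx
  have huodd : ¬ Even (u : ℤ) := by
    rw [Int.even_coe_nat]; exact fun ⟨u', h'⟩ => hu2 ⟨u', by omega⟩
  obtain ⟨e, he⟩ : Even (w + u) := by
    rw [Int.not_even_iff_odd] at hwodd huodd
    rcases hwodd with ⟨w', rfl⟩; rcases huodd with ⟨u', hu'⟩
    exact ⟨w' + u' + 1, by omega⟩
  have htz : (t : ℤ) = 2 ^ k * u := by exact_mod_cast congrArg (Nat.cast : ℕ → ℤ) htu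
  have hpow : (2 : ℤ) ^ (n + 1) = 2 ^ (k + 1) * 2 ^ (n - k) := by
    rw [← pow_add]; congr 1; omega
  have hpk : (2 : ℤ) ^ (k + 1) = 2 ^ k * 2 := by ring
  have e1 : x + t = h k + (2 ^ (n - k) * s + e) * 2 ^ (k + 1) := by
    rw [hpk]
    linear_combination hs + hw + htz + (2 : ℤ) ^ k * he + s * hpow + s * 2 ^ (n - k) * hpk
  have e2 : x - t = h k + (2 ^ (n - k) * s + e - u) * 2 ^ (k + 1) := by
    rw [hpk]
    linear_combination hs + hw - htz + (2 : ℤ) ^ k * he + s * hpow + s * 2 ^ (n - k) * hpk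
  rw [e1, e2]
  exact alt_neg (halt k) (q := 2 ^ (n - k) * s + e - u) (p := 2 ^ (n - k) * s + e)
    (by simpa [Int.even_sub, Int.even_add, parity_simps] using huodd)


theorem statement6 (a : ℤ → ℤ) (hpm : PM a) (h : ℕ → ℤ)
    (halt : ∀ n : ℕ, AltProp a n (h n)) (n : ℕ) (x : ℤ)
    (hx : (2 ^ n : ℤ) ∣ (x - h n)) :
    IsFold (n + 1) (subwordAt a (x - 2 ^ n) (2 ^ (n + 1) - 1)) := by
  induction n generalizing x with
  | zero =>
    have e : subwordAt a (x - 2 ^ 0) (2 ^ (0 + 1) - 1) = negRev [] ++ (a x) :: [] := by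
      show subwordAt a (x - 1) 1 = _
      rw [subwordAt_one]
      norm_num [negRev]
    rw [e]
    exact IsFold.succ 0 [] (a x) IsFold.zero (hpm x)
  | succ n ih =>
    have hL1 : 1 ≤ (2 : ℕ) ^ (n + 1) := Nat.one_le_two_pow
    set L : ℕ := 2 ^ (n + 1) - 1 with hL
    have hcastL : ((L : ℕ) : ℤ) = 2 ^ (n + 1) - 1 := by
      rw [hL, Nat.cast_sub hL1]; push_cast; ring
    -- the inner fold
    have hxn : (2 ^ n : ℤ) ∣ ((x + 2 ^ n) - h n) := by
      have d1 : (2 ^ n : ℤ) ∣ (x - h (n + 1)) := dvd_trans ⟨2, by ring⟩ hx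
      have d2 : (2 ^ n : ℤ) ∣ (h (n + 1) - h n) := h_dvd hpm halt (Nat.le_succ n)
      have e : (x + 2 ^ n) - h n = (x - h (n + 1)) + (h (n + 1) - h n) + 2 ^ n := by ring
      rw [e]; exact dvd_add (dvd_add d1 d2) dvd_rfl
    have IH : IsFold (n + 1) (subwordAt a x L) := by
      have := ih (x + 2 ^ n) hxn
      rwa [show x + 2 ^ n - 2 ^ n = x from by ring] at this
    -- antisymmetry
    have hLlt : L < 2 ^ (n + 1) := Nat.sub_lt (by positivity) one_pos
    have anti : ∀ t : ℕ, 0 < t → t ≤ L → a (x - t) = - a (x + t) :=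
      fun t ht0 htL => antisym hpm halt hx ht0 (lt_of_le_of_lt htL hLlt)
    -- decompose the word
    have hsplit : (2 : ℕ) ^ (n + 1 + 1) - 1 = L + (1 + L) := by
      have e2 : (2 : ℕ) ^ (n + 1 + 1) = 2 ^ (n + 1) + 2 ^ (n + 1) := by ring
      omega
    rw [hsplit, subwordAt_append, subwordAt_append, subwordAt_one]
    simp only [Nat.cast_one]
    rw [show x - 2 ^ (n + 1) + (L : ℤ) + 1 = x from by rw [hcastL]; ring]
    rw [show x - 2 ^ (n + 1) = x - (L : ℤ) - 1 from by rw [hcastL]; ring]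
    rw [← negRev_subwordAt a x L anti]
    exact IsFold.succ (n + 1) _ (a x) IH (hpm x)
end
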